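/- Let $n\geq 3$ and let $\mathcal{L}_S$ be the $n\times n$ matrix with diagonal $\frac{4}{3}$, super/sub-diagonal $-\frac{1}{3}$, and corner entries $+\frac{1}{3}$ at $(1,n),(n,1)$. Then the sum of all $(n-1)\times(n-1)$ principal minors of $\mathcal{L}_S$ equals $\frac{n}{2\sqrt{3}}\cdot\frac{(2+\sqrt{3})^{n}-(2-\sqrt{3})^{n}}{3^{n-1}}$. -/

import Mathlib

/-!
Deleting vertex `i` from the signed cycle `𝓛_S` leaves a path. Listing the remaining vertices
along that path, `i + 1, …, n - 1, 0, …, i - 1`, the only edge with the "wrong" sign `+1/3` is the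
wrap-around edge `(n - 1, 0)`, and conjugating by the `±1` diagonal matrix that negates the vertices
past the wrap turns it into `-1/3`. So every principal minor equals the determinant `d_{n-1}` of the
tridiagonal Toeplitz matrix with diagonal `4/3` and off-diagonal `-1/3`. Expanding along the first
row gives `d_{k+2} = 4/3 d_{k+1} - 1/9 d_k`, whose characteristic roots are `(2 ± √3) / 3`.
-/

/-- The matrix `𝓛_S`: diagonal `4/3`, subdiagonal and superdiagonal `-1/3`,
corner entries `+1/3` at positions `(1,n)` and `(n,1)`. -/
noncomputable def LSnorm (n : ℕ) : Matrix (Fin n) (Fin n) ℝ :=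
  Matrix.of fun i j =>
    if i = j then 4 / 3
    else if i.val + 1 = j.val ∨ j.val + 1 = i.val then -(1 / 3)
    else if (i.val = 0 ∧ j.val = n - 1) ∨ (i.val = n - 1 ∧ j.val = 0) then 1 / 3
    else 0

open Matrix

section Tridiagonal

variable {R : Type*} [CommRing R] (a b : R)

def tridiag (k : ℕ) : Matrix (Fin k) (Fin k) R :=
  Matrix.of fun i j => if i = j then a else if i.val + 1 = j.val ∨ j.val + 1 = i.val then b else 0

lemma tridiag_submatrix_succ (k : ℕ) :
    (tridiag a b (k + 1)).submatrix Fin.succ Fin.succ = tridiag a b k := by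
  ext i j
  simp [tridiag, Fin.ext_iff]

lemma det_tridiag_submatrix_succ_succAbove_one (k : ℕ) :
    ((tridiag a b (k + 2)).submatrix Fin.succ (Fin.succAbove 1)).det =
      b * (tridiag a b k).det := by
  rw [det_succ_column_zero, Fin.sum_univ_succ, Finset.sum_eq_zero]
  · have hminor : ((tridiag a b (k + 2)).submatrix Fin.succ (Fin.succAbove 1)).submatrix
        (Fin.succAbove 0) Fin.succ = tridiag a b k := by
      ext i j
      simp [tridiag, Fin.ext_iff]
    rw [hminor]
    simp [tridiag]
  · intro i _
    simp [tridiag, Fin.ext_iff]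

theorem det_tridiag_add_two (k : ℕ) :
    (tridiag a b (k + 2)).det =
      a * (tridiag a b (k + 1)).det - b ^ 2 * (tridiag a b k).det := by
  rw [det_succ_row_zero, Fin.sum_univ_succ, Fin.sum_univ_succ, Finset.sum_eq_zero]
  · rw [Fin.succAbove_zero, tridiag_submatrix_succ, Fin.succ_zero_eq_one,
      det_tridiag_submatrix_succ_succAbove_one]
    have h00 : tridiag a b (k + 2) 0 0 = a := by simp [tridiag]
    have h01 : tridiag a b (k + 2) 0 1 = b := by simp [tridiag]
    rw [h00, h01]
    simp only [Fin.val_zero, Fin.val_one, pow_zero, pow_one]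
    ring
  · intro j _
    simp [tridiag, Fin.ext_iff]

end Tridiagonal

theorem det_tridiag_four_thirds (k : ℕ) :
    (tridiag (4 / 3 : ℝ) (-(1 / 3)) k).det =
      ((2 + √3) ^ (k + 1) - (2 - √3) ^ (k + 1)) / (2 * √3 * 3 ^ k) := by
  have h3 : √3 ^ 2 = 3 := Real.sq_sqrt (by norm_num)
  have hroot : ∀ x : ℝ, x ^ 2 = 4 * x - 1 → ∀ k, x ^ (k + 3) = 4 * x ^ (k + 2) - x ^ (k + 1) :=
    fun x hx k => by linear_combination x ^ (k + 1) * hx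
  induction k using Nat.twoStepInduction with
  | zero => rw [det_fin_zero]; field_simp; ring
  | one => rw [det_unique]; simp only [tridiag, of_apply, if_pos]; field_simp; ring
  | more k ih1 ih2 =>
    rw [det_tridiag_add_two, ih1, ih2, hroot _ (by linear_combination h3),
      hroot _ (by linear_combination h3)]
    field_simp
    ring

theorem det_submatrix_eq_of_forall_mem_range {R ι κ : Type*} [CommRing R] [Fintype κ]
    [DecidableEq κ] (A : Matrix ι ι R) {f g : κ → ι} (hf : f.Injective)
    (hfg : ∀ k, f k ∈ Set.range g) :
    (A.submatrix f f).det = (A.submatrix g g).det := by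
  choose π hπ using hfg
  have hπinj : π.Injective := fun k l h => hf (by rw [← hπ k, ← hπ l, h])
  let e : κ ≃ κ := Equiv.ofBijective π hπinj.bijective_of_finite
  have hfe : f = g ∘ e := funext fun k => (hπ k).symm
  rw [hfe, ← submatrix_submatrix, det_submatrix_equiv_self]

theorem det_diagonal_mul_mul_diagonal {R n : Type*} [CommRing R] [Fintype n] [DecidableEq n]
    (M : Matrix n n R) {s : n → R} (hs : ∀ i, s i * s i = 1) :
    (diagonal s * M * diagonal s).det = M.det := by
  rw [det_mul, det_mul, det_diagonal, mul_right_comm, ← Finset.prod_mul_distrib,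
    Finset.prod_eq_one fun i _ => hs i, one_mul]

section CyclePath

variable {m : ℕ} (i : Fin (m + 1))

/-- The `(j + 1)`-st vertex after `i` on the cycle `0 → 1 → ⋯ → m → 0`. -/
def cyclePathAfter (j : Fin m) : Fin (m + 1) :=
  ⟨if i.val + 1 + j ≤ m then i.val + 1 + j else i.val + j - m, by split_ifs <;> omega⟩

def wrapSign (j : Fin m) : ℝ :=
  if i.val + 1 + j ≤ m then 1 else -1

lemma cyclePathAfter_injective : (cyclePathAfter i).Injective := by
  intro j k h
  simp only [cyclePathAfter, Fin.ext_iff] at h ⊢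
  split_ifs at h <;> omega

lemma cyclePathAfter_ne (j : Fin m) : cyclePathAfter i j ≠ i := by
  simp only [cyclePathAfter, ne_eq, Fin.ext_iff]
  split_ifs <;> omega

lemma LSnorm_submatrix_cyclePathAfter :
    (LSnorm (m + 1)).submatrix (cyclePathAfter i) (cyclePathAfter i) =
      diagonal (wrapSign i) * tridiag (4 / 3) (-(1 / 3)) m * diagonal (wrapSign i) := by
  ext j k
  simp only [submatrix_apply, mul_diagonal, diagonal_mul, LSnorm, tridiag, wrapSign,
    cyclePathAfter, of_apply, Fin.ext_iff]
  split_ifs <;> first | (exfalso; omega) | norm_num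

lemma det_LSnorm_submatrix_succAbove :
    ((LSnorm (m + 1)).submatrix i.succAbove i.succAbove).det =
      (tridiag (4 / 3 : ℝ) (-(1 / 3)) m).det := by
  have hmem : ∀ j, cyclePathAfter i j ∈ Set.range i.succAbove := fun j => by
    rw [Fin.range_succAbove]
    exact cyclePathAfter_ne i j
  rw [← det_submatrix_eq_of_forall_mem_range _ (cyclePathAfter_injective i) hmem,
    LSnorm_submatrix_cyclePathAfter, det_diagonal_mul_mul_diagonal]
  intro j
  unfold wrapSign
  split_ifs <;> norm_num

end CyclePath

theorem stmt14_general (m : ℕ) :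
    ∑ i : Fin (m + 1),
        ((LSnorm (m + 1)).submatrix i.succAbove i.succAbove).det =
      (m + 1) / (2 * Real.sqrt 3) *
        (((2 + Real.sqrt 3) ^ (m + 1) - (2 - Real.sqrt 3) ^ (m + 1)) / 3 ^ m) := by
  simp only [det_LSnorm_submatrix_succAbove, Finset.sum_const, Finset.card_univ,
    Fintype.card_fin, nsmul_eq_mul, det_tridiag_four_thirds]
  push_cast
  field_simp

/-- The sum of all `(n-1) × (n-1)` principal minors of `𝓛_S` (here `n = m + 1`). -/
theorem stmt14 (m : ℕ) (hn : 3 ≤ m + 1) :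
    ∑ i : Fin (m + 1),
        ((LSnorm (m + 1)).submatrix i.succAbove i.succAbove).det =
      (m + 1) / (2 * Real.sqrt 3) *
        (((2 + Real.sqrt 3) ^ (m + 1) - (2 - Real.sqrt 3) ^ (m + 1)) / 3 ^ m) :=
  stmt14_general m
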